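/- arXiv:2506.07991 — 2 statements merged into one kernel-verified Lean document; each statement's English description precedes it below -/
import Mathlib

section
/- Let Γ be a finitely generated, virtually torsion-free, virtually FAR group, let T = τ(Γ) be its (finite) subgroup generated by all normal torsion subgroups, and let π : Γ → Γ/T be the quotient map. Then π(Fitt(Γ)) is contained in Fitt(Γ/T) and has finite index in Fitt(Γ/T). -/
/-- The pair of subgroups `K ≤ H` of `G` forms an *abelian factor of finite ranks*:
`K` is normal in `H`, the factor `H/K` is abelian, has finite torsion-free rank
(some `n` bounds the size of any independent family modulo `K`), and for every prime `p`
the `p`-torsion of `H/K` is finite (it is covered by finitely many cosets of `K`). -/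
def IsFARFactor {G : Type*} [Group G] (K H : Subgroup G) : Prop :=
  K ≤ H ∧
  (∀ x ∈ H, ∀ y ∈ K, x * y * x⁻¹ ∈ K) ∧
  (∀ x ∈ H, ∀ y ∈ H, x * y * x⁻¹ * y⁻¹ ∈ K) ∧
  (∃ n : ℕ, ∀ f : Fin (n + 1) → G, (∀ i, f i ∈ H) →
    ∃ c : Fin (n + 1) → ℤ, c ≠ 0 ∧ (List.ofFn fun i => f i ^ c i).prod ∈ K) ∧
  (∀ p : ℕ, p.Prime → ∃ F : Finset G, ∀ x ∈ H, x ^ p ∈ K → ∃ b ∈ F, b⁻¹ * x ∈ K)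

/-- A group has *finite abelian ranks* (is a FAR-group) if it admits a finite normal
series whose factors are abelian groups of finite torsion-free rank and finite `p`-rank
for every prime `p`. -/
def IsFARGroup (G : Type*) [Group G] : Prop :=
  ∃ (n : ℕ) (s : Fin (n + 1) → Subgroup G),
    s 0 = ⊥ ∧ s (Fin.last n) = ⊤ ∧ ∀ i : Fin n, IsFARFactor (s i.castSucc) (s i.succ)

/-- A group is virtually FAR if it has a finite-index subgroup which is a FAR-group. -/
def IsVirtuallyFAR (G : Type*) [Group G] : Prop :=
  ∃ H : Subgroup G, H.FiniteIndex ∧ IsFARGroup H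

/-- `τ(Γ)`: the subgroup generated by all normal torsion subgroups of `Γ`. -/
def tau (Γ : Type*) [Group Γ] : Subgroup Γ :=
  Subgroup.closure {g | ∃ N : Subgroup Γ, N.Normal ∧ (∀ x ∈ N, IsOfFinOrder x) ∧ g ∈ N}

instance tau.normal (Γ : Type*) [Group Γ] : (tau Γ).Normal := by
  constructor
  intro n hn g
  have himg : (⇑(MulAut.conj g).toMonoidHom) ''
      {x : Γ | ∃ N : Subgroup Γ, N.Normal ∧ (∀ y ∈ N, IsOfFinOrder y) ∧ x ∈ N} =
      {x : Γ | ∃ N : Subgroup Γ, N.Normal ∧ (∀ y ∈ N, IsOfFinOrder y) ∧ x ∈ N} := by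
    ext x
    constructor
    · rintro ⟨y, ⟨N, hN, hT, hy⟩, rfl⟩
      exact ⟨N, hN, hT, by simpa [MulAut.conj] using hN.conj_mem y hy g⟩
    · rintro ⟨N, hN, hT, hx⟩
      refine ⟨g⁻¹ * x * g, ⟨N, hN, hT, by simpa using hN.conj_mem x hx g⁻¹⟩, ?_⟩
      simp [MulAut.conj, mul_assoc]
  have hmem : g * n * g⁻¹ ∈ Subgroup.map (MulAut.conj g).toMonoidHom (tau Γ) :=
    ⟨n, hn, by simp [MulAut.conj]⟩
  rwa [tau, MonoidHom.map_closure, himg] at hmem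

/-- A monoid is torsion-free if no element other than `1` has finite order
(the old Mathlib definition, no longer present). -/
def Monoid.IsTorsionFree (G : Type*) [Monoid G] : Prop :=
  ∀ g : G, g ≠ 1 → ¬IsOfFinOrder g

/-- The Fitting subgroup: the subgroup generated by all nilpotent normal subgroups. -/
def Fitt (Γ : Type*) [Group Γ] : Subgroup Γ :=
  Subgroup.closure {g | ∃ N : Subgroup Γ, N.Normal ∧ Group.IsNilpotent N ∧ g ∈ N}

/-!
Conjugation maps `Γ` to the finite group `MulAut (tau Γ)` with kernel inside the centralizer `D`
of `tau Γ`, so `D` has finite index. If `N` is a nilpotent normal subgroup of `Γ ⧸ tau Γ`, then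
`D ⊓ π⁻¹(N)` is normal, and nilpotent because the kernel of `π` on it is central; hence
`π(D) ⊓ Fitt(Γ ⧸ tau Γ) ≤ π(Fitt Γ)`, which gives the finite index. The inclusion holds because
images of nilpotent normal subgroups are nilpotent and normal. Both steps read `Fitt` as the union
of the nilpotent normal subgroups, which is Fitting's theorem that the join of two nilpotent normal
subgroups is nilpotent.
-/

namespace Subgroup

variable {G G' : Type*} [Group G] [Group G']

theorem commutator_le_iff_le_comap_centralizer {X Y N : Subgroup G} [N.Normal] :
    ⁅X, Y⁆ ≤ N ↔
      X ≤ (centralizer (Y.map (QuotientGroup.mk' N) : Set (G ⧸ N))).comap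
        (QuotientGroup.mk' N) := by
  calc ⁅X, Y⁆ ≤ N ↔ ⁅X, Y⁆ ≤ (QuotientGroup.mk' N).ker := by rw [QuotientGroup.ker_mk']
    _ ↔ _ := by
      rw [← map_eq_bot_iff, map_commutator, commutator_eq_bot_iff_le_centralizer,
        map_le_iff_le_comap]

theorem commutator_sup_right_le {X Y Z N : Subgroup G} [N.Normal]
    (hY : ⁅X, Y⁆ ≤ N) (hZ : ⁅X, Z⁆ ≤ N) : ⁅X, Y ⊔ Z⁆ ≤ N := by
  rw [commutator_comm, commutator_le_iff_le_comap_centralizer] at hY hZ ⊢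
  exact sup_le hY hZ

theorem commutator_iSup₂_left_le {ι : Sort*} {κ : ι → Sort*} {X : (i : ι) → κ i → Subgroup G}
    {Y N : Subgroup G} [N.Normal] (h : ∀ i j, ⁅X i j, Y⁆ ≤ N) : ⁅⨆ i, ⨆ j, X i j, Y⁆ ≤ N := by
  rw [commutator_le_iff_le_comap_centralizer]
  exact iSup₂_le fun i j => commutator_le_iff_le_comap_centralizer.mp (h i j)

/-- In the proof of Fitting's theorem `u`, `v` are the lower central series of `H`, `K`:
commutators with `H` raise `i`, those with `K` raise `j`, and `u i ⊓ v j` vanishes once `i` or `j`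
is large. -/
def antidiagonalSup (u v : ℕ → Subgroup G) (n : ℕ) : Subgroup G :=
  ⨆ (p : ℕ × ℕ) (_ : p.1 + p.2 = n), u p.1 ⊓ v p.2

theorem inf_le_antidiagonalSup (u v : ℕ → Subgroup G) {i j n : ℕ} (h : i + j = n) :
    u i ⊓ v j ≤ antidiagonalSup u v n :=
  le_iSup₂_of_le (i, j) h le_rfl

instance antidiagonalSup_normal (u v : ℕ → Subgroup G) [∀ i, (u i).Normal] [∀ j, (v j).Normal]
    (n : ℕ) : (antidiagonalSup u v n).Normal := by
  unfold antidiagonalSup; infer_instance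

theorem commutator_antidiagonalSup_le {H K : Subgroup G} {u v : ℕ → Subgroup G}
    [∀ i, (u i).Normal] [∀ j, (v j).Normal]
    (hu : ∀ i, ⁅u i, H⁆ ≤ u (i + 1)) (hv : ∀ j, ⁅v j, K⁆ ≤ v (j + 1)) (n : ℕ) :
    ⁅antidiagonalSup u v n, H ⊔ K⁆ ≤ antidiagonalSup u v (n + 1) := by
  refine commutator_iSup₂_left_le fun ⟨i, j⟩ hij => commutator_sup_right_le ?_ ?_
  · refine le_trans (le_inf ?_ ?_) (inf_le_antidiagonalSup u v (by omega : (i + 1) + j = n + 1))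
    · exact (commutator_mono inf_le_left le_rfl).trans (hu i)
    · exact (commutator_mono inf_le_right le_rfl).trans (commutator_le_left _ _)
  · refine le_trans (le_inf ?_ ?_) (inf_le_antidiagonalSup u v (by omega : i + (j + 1) = n + 1))
    · exact (commutator_mono inf_le_left le_rfl).trans (commutator_le_left _ _)
    · exact (commutator_mono inf_le_right le_rfl).trans (hv j)

theorem antidiagonalSup_eq_bot {u v : ℕ → Subgroup G} (hu : Antitone u) (hv : Antitone v)
    {a b n : ℕ} (ha : u a = ⊥) (hb : v b = ⊥) (hn : a + b ≤ n) : antidiagonalSup u v n = ⊥ :=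
  eq_bot_iff.mpr <| iSup₂_le fun p (hp : p.1 + p.2 = n) => by
    rcases le_or_gt a p.1 with h | h
    · exact inf_le_left.trans ((hu h).trans ha.le)
    · exact inf_le_right.trans ((hv (by omega : b ≤ p.2)).trans hb.le)

/-- `⊤, S, ⁅S, S⁆, …`: the lower central series of `S` in `G` with `⊤` prepended, so that the
`antidiagonalSup` of two such series at `1` contains `S ⊔ T`. -/
def shiftedLowerCentralSeries (S : Subgroup G) : ℕ → Subgroup G
  | 0 => ⊤
  | n + 1 => S.lowerCentralSeries n

section

variable (S : Subgroup G)

instance shiftedLowerCentralSeries_normal [S.Normal] :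
    ∀ n, (S.shiftedLowerCentralSeries n).Normal
  | 0 => inferInstanceAs (⊤ : Subgroup G).Normal
  | n + 1 => inferInstanceAs (S.lowerCentralSeries n).Normal

theorem commutator_shiftedLowerCentralSeries_le [S.Normal] :
    ∀ n, ⁅S.shiftedLowerCentralSeries n, S⁆ ≤ S.shiftedLowerCentralSeries (n + 1)
  | 0 => commutator_le_right _ _
  | _ + 1 => le_rfl

theorem shiftedLowerCentralSeries_antitone : Antitone S.shiftedLowerCentralSeries :=
  antitone_nat_of_succ_le fun
    | 0 => le_top
    | n + 1 => S.lowerCentralSeries_antitone n.le_succ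

end

theorem isNilpotent_sup (H K : Subgroup G) [H.Normal] [K.Normal] [Group.IsNilpotent H]
    [Group.IsNilpotent K] : Group.IsNilpotent ↥(H ⊔ K) := by
  obtain ⟨c, hc⟩ := (isNilpotent_iff_lowerCentralSeries H).mp ‹_›
  obtain ⟨d, hd⟩ := (isNilpotent_iff_lowerCentralSeries K).mp ‹_›
  let u := H.shiftedLowerCentralSeries
  let v := K.shiftedLowerCentralSeries
  have hle : ∀ n, (H ⊔ K).lowerCentralSeries n ≤ antidiagonalSup u v (n + 1) := by
    intro n
    induction n with
    | zero =>
      have hH : H ≤ u 1 ⊓ v 0 := le_inf le_rfl le_top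
      have hK : K ≤ u 0 ⊓ v 1 := le_inf le_top le_rfl
      exact sup_le (hH.trans (inf_le_antidiagonalSup u v rfl))
        (hK.trans (inf_le_antidiagonalSup u v rfl))
    | succ n ih =>
      exact (commutator_mono ih le_rfl).trans <| commutator_antidiagonalSup_le
        (commutator_shiftedLowerCentralSeries_le H) (commutator_shiftedLowerCentralSeries_le K) _
  have hB : antidiagonalSup u v (c + d + 2) = ⊥ :=
    antidiagonalSup_eq_bot (shiftedLowerCentralSeries_antitone H)
      (shiftedLowerCentralSeries_antitone K) (a := c + 1) (b := d + 1) hc hd (by omega)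
  exact (isNilpotent_iff_lowerCentralSeries _).mpr
    ⟨c + d + 1, eq_bot_iff.mpr ((hle _).trans hB.le)⟩

theorem isNilpotent_of_le {A B : Subgroup G} (h : A ≤ B) [Group.IsNilpotent B] :
    Group.IsNilpotent A := by
  obtain ⟨n, hn⟩ := (isNilpotent_iff_lowerCentralSeries B).mp ‹_›
  exact (isNilpotent_iff_lowerCentralSeries A).mpr
    ⟨n, eq_bot_iff.mpr (hn ▸ lowerCentralSeries_mono n h)⟩

theorem isNilpotent_of_le_centralizer_ker (f : G →* G') {C : Subgroup G}
    (hC : C ≤ centralizer (f.ker : Set G)) [Group.IsNilpotent (C.map f)] :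
    Group.IsNilpotent C :=
  isNilpotent_of_ker_le_center (f.subgroupMap C) fun c hc =>
    mem_center_iff.mpr fun z => Subtype.ext <|
      (mem_centralizer_iff.mp (hC z.2) c (congrArg Subtype.val hc)).symm

theorem ker_conjNormal_le_centralizer (N : Subgroup G) [N.Normal] :
    (MulAut.conjNormal : G →* MulAut N).ker ≤ centralizer (N : Set G) := fun g hg h hh => by
  have hconj : g * h * g⁻¹ = h := by
    rw [← MulAut.conjNormal_apply g ⟨h, hh⟩, MonoidHom.mem_ker.mp hg]; rfl
  rw [mul_inv_eq_iff_eq_mul] at hconj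
  exact hconj.symm

instance finiteIndex_centralizer (N : Subgroup G) [N.Normal] [Finite N] :
    (centralizer (N : Set G)).FiniteIndex :=
  finiteIndex_of_le (ker_conjNormal_le_centralizer N)

theorem finiteIndex_map {f : G →* G'} (hf : Function.Surjective f) (H : Subgroup G)
    [H.FiniteIndex] : (H.map f).FiniteIndex :=
  ⟨fun h0 => FiniteIndex.index_ne_zero (zero_dvd_iff.mp (h0 ▸ index_map_dvd H hf))⟩

theorem relIndex_ne_zero_of_inf_le {A K F : Subgroup G} [K.FiniteIndex] (h : K ⊓ F ≤ A) :
    A.relIndex F ≠ 0 := fun h0 => by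
  have := relIndex_eq_zero_of_le_left h h0
  rw [inf_relIndex_right] at this
  exact (isFiniteRelIndex_of_finiteIndex (K := F)).relIndex_ne_zero this

end Subgroup

section Fitting

open Subgroup

variable {G G' : Type*} [Group G] [Group G']

theorem mem_Fitt_iff {x : G} :
    x ∈ Fitt G ↔ ∃ N : Subgroup G, N.Normal ∧ Group.IsNilpotent N ∧ x ∈ N := by
  refine ⟨fun hx => ?_, fun hx => Subgroup.subset_closure hx⟩
  induction hx using closure_induction with
  | mem x hx => exact hx
  | one => exact ⟨⊥, inferInstance, inferInstance, one_mem _⟩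
  | mul x y _ _ hx hy =>
    obtain ⟨N, _, _, hxN⟩ := hx
    obtain ⟨M, _, _, hyM⟩ := hy
    exact ⟨N ⊔ M, inferInstance, isNilpotent_sup N M,
      mul_mem (mem_sup_left hxN) (mem_sup_right hyM)⟩
  | inv x _ hx =>
    obtain ⟨N, hN, hNn, hxN⟩ := hx
    exact ⟨N, hN, hNn, inv_mem hxN⟩

theorem map_Fitt_le_of_surjective {f : G →* G'} (hf : Function.Surjective f) :
    (Fitt G).map f ≤ Fitt G' := by
  rintro _ ⟨g, hg, rfl⟩
  obtain ⟨N, hN, _, hgN⟩ := mem_Fitt_iff.mp hg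
  exact mem_Fitt_iff.mpr ⟨N.map f, hN.map f hf,
    Group.nilpotent_of_surjective (f.subgroupMap N) (f.subgroupMap_surjective N),
    mem_map_of_mem f hgN⟩

theorem map_centralizer_ker_inf_Fitt_le (f : G →* G') :
    (centralizer (f.ker : Set G)).map f ⊓ Fitt G' ≤ (Fitt G).map f := by
  rintro _ ⟨⟨g, hg, rfl⟩, hgF⟩
  obtain ⟨N, _, _, hgN⟩ := mem_Fitt_iff.mp hgF
  let C := centralizer (f.ker : Set G) ⊓ N.comap f
  have : Group.IsNilpotent (C.map f) := isNilpotent_of_le (map_le_iff_le_comap.mpr inf_le_right)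
  exact ⟨g, mem_Fitt_iff.mpr ⟨C, inferInstance, isNilpotent_of_le_centralizer_ker f inf_le_left,
    hg, hgN⟩, rfl⟩

end Fitting

theorem image_fitting_finiteIndex_in_fitting_quotient_general
    {Γ : Type*} [Group Γ]
    (hTfin : (tau Γ : Set Γ).Finite) :
    Subgroup.map (QuotientGroup.mk' (tau Γ)) (Fitt Γ) ≤ Fitt (Γ ⧸ tau Γ) ∧
      (Subgroup.map (QuotientGroup.mk' (tau Γ)) (Fitt Γ)).relIndex (Fitt (Γ ⧸ tau Γ)) ≠ 0 := by
  have hπ := QuotientGroup.mk'_surjective (tau Γ)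
  have : Finite (tau Γ) := hTfin.to_subtype
  have := Subgroup.finiteIndex_map hπ (Subgroup.centralizer (tau Γ : Set Γ))
  have hkey := map_centralizer_ker_inf_Fitt_le (QuotientGroup.mk' (tau Γ))
  rw [QuotientGroup.ker_mk'] at hkey
  exact ⟨map_Fitt_le_of_surjective hπ, Subgroup.relIndex_ne_zero_of_inf_le hkey⟩

/-- For a finitely generated, virtually torsion-free, virtually FAR group `Γ` with
`T = τ(Γ)` finite and quotient map `π : Γ → Γ/T`, the image `π(Fitt(Γ))` is contained
in `Fitt(Γ/T)` and has finite index in `Fitt(Γ/T)`. -/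
theorem image_fitting_finiteIndex_in_fitting_quotient
    {Γ : Type*} [Group Γ] (hfg : Group.FG Γ)
    (hvtf : ∃ H : Subgroup Γ, H.FiniteIndex ∧ Monoid.IsTorsionFree H)
    (hFAR : IsVirtuallyFAR Γ)
    (hTfin : (tau Γ : Set Γ).Finite) :
    Subgroup.map (QuotientGroup.mk' (tau Γ)) (Fitt Γ) ≤ Fitt (Γ ⧸ tau Γ) ∧
      (Subgroup.map (QuotientGroup.mk' (tau Γ)) (Fitt Γ)).relIndex (Fitt (Γ ⧸ tau Γ)) ≠ 0 :=
  image_fitting_finiteIndex_in_fitting_quotient_general hTfin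
end

section
/- Let Γ be a finitely generated, virtually torsion-free, virtually FAR group with T = τ(Γ) finite, and let Γ₀ be a characteristic, torsion-free subgroup of finite index in Γ with Γ₀ ∩ T = {1}. Write Γ̂ = Γ/T and Γ̂₀ for the image of Γ₀ in Γ̂. Then every automorphism of Γ̂ that induces the identity automorphism of Γ̂/Γ̂₀ is induced by an automorphism of Γ that induces the identity automorphism of Γ/Γ₀; consequently, the natural homomorphism Aut(Γ) → Aut(Γ̂) has image of finite index in Aut(Γ̂). -/
/-!
Since `Γ₀ ∩ T = 1`, an element of `Γ` is determined by its image in `Γ/T` together with its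
coset modulo `Γ₀`. An automorphism `ψ` of `Γ/T` that is trivial modulo the image of `Γ₀` therefore
lifts uniquely to a self-map of `Γ` moving each element only within its `Γ₀`-coset, and uniqueness
of such lifts makes this map multiplicative and invertible. For the finite-index statement, the
finitely generated group `Γ/T` has only finitely many homomorphisms to the symmetric group of
`(Γ/T)/Γ̂₀`, and the intersection of their kernels is a characteristic subgroup `K ≤ Γ̂₀` of finite
index; the automorphisms of `Γ/T` acting trivially on the finite group `(Γ/T)/K` form a
finite-index subgroup, and each of them lifts.
-/

theorem MonoidHom.finite_of_fg (M S : Type*) [Monoid M] [Monoid.FG M] [Monoid S] [Finite S] :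
    Finite (M →* S) := by
  obtain ⟨s, hs, hfin⟩ := Monoid.fg_iff.mp ‹Monoid.FG M›
  have := hfin.to_subtype
  refine Finite.of_injective (fun (f : M →* S) (x : s) => f x) fun f g hfg => ?_
  exact MonoidHom.eq_of_eqOn_denseM hs fun x hx => congrFun hfg ⟨x, hx⟩

theorem Subgroup.exists_characteristic_finiteIndex_le {G : Type*} [Group G] [Group.FG G]
    (H : Subgroup G) [H.FiniteIndex] :
    ∃ K : Subgroup G, K.Characteristic ∧ K.FiniteIndex ∧ K ≤ H := by
  have := MonoidHom.finite_of_fg G (Equiv.Perm (G ⧸ H))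
  refine ⟨⨅ f : G →* Equiv.Perm (G ⧸ H), f.ker, ?_, finiteIndex_iInf fun f => finiteIndex_ker f, ?_⟩
  · refine characteristic_iff_le_comap.mpr fun ϕ x hx => mem_iInf.mpr fun f => ?_
    exact mem_iInf.mp hx (f.comp ϕ.toMonoidHom)
  · calc ⨅ f : G →* Equiv.Perm (G ⧸ H), f.ker
        ≤ (MulAction.toPermHom G (G ⧸ H)).ker := iInf_le _ _
      _ = H.normalCore := (normalCore_eq_ker H).symm
      _ ≤ H := normalCore_le H

namespace MulAut

variable {G : Type*} [Group G]

def congruenceSubgroup (K : Subgroup G) : Subgroup (MulAut G) where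
  carrier := {a | ∀ x, a x * x⁻¹ ∈ K}
  one_mem' x := by simp
  mul_mem' {a b} ha hb x := by simpa [mul_assoc] using K.mul_mem (ha (b x)) (hb x)
  inv_mem' {a} ha x := by simpa using K.inv_mem (ha (a⁻¹ x))

theorem congruenceSubgroup_mono : Monotone (congruenceSubgroup (G := G)) :=
  fun _ _ hKL _ ha x => hKL (ha x)

def quotientHom (K : Subgroup G) [K.Characteristic] : MulAut G →* MulAut (G ⧸ K) where
  toFun a := QuotientGroup.congr K K a (Subgroup.characteristic_iff_map_eq.mp ‹_› a)
  map_one' := by ext x; induction x using QuotientGroup.induction_on; rfl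
  map_mul' a b := by ext x; induction x using QuotientGroup.induction_on; rfl

theorem ker_quotientHom (K : Subgroup G) [K.Characteristic] :
    (quotientHom K).ker = congruenceSubgroup K := by
  ext a
  simp only [MonoidHom.mem_ker, MulEquiv.ext_iff, QuotientGroup.forall_mk, one_apply]
  refine forall_congr' fun x => ?_
  rw [← div_eq_mul_inv, ← QuotientGroup.eq_iff_div_mem]
  exact Iff.rfl

instance finiteIndex_congruenceSubgroup (K : Subgroup G) [K.Characteristic] [K.FiniteIndex] :
    (congruenceSubgroup K).FiniteIndex := by
  rw [← ker_quotientHom]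
  exact Subgroup.finiteIndex_ker _

end MulAut

section LiftFromQuotient

open QuotientGroup MulAut

variable {G : Type*} [Group G] {N T : Subgroup G}

theorem eq_of_mul_inv_mem_of_mk_eq [T.Normal] (hNT : N ⊓ T = ⊥) {a b : G} (hN : a * b⁻¹ ∈ N)
    (hT : mk' T a = mk' T b) : a = b := by
  have hT' : a * b⁻¹ ∈ T := by rwa [mk'_apply, mk'_apply, eq_iff_div_mem, div_eq_mul_inv] at hT
  have hbot : a * b⁻¹ ∈ N ⊓ T := ⟨hN, hT'⟩
  rwa [hNT, Subgroup.mem_bot, mul_inv_eq_one] at hbot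

theorem exists_monoidHom_lift [N.Normal] [T.Normal] (hNT : N ⊓ T = ⊥) (ψ : G ⧸ T →* G ⧸ T)
    (hψ : ∀ x, ψ x * x⁻¹ ∈ N.map (mk' T)) :
    ∃ f : G →* G, ∀ x, f x * x⁻¹ ∈ N ∧ mk' T (f x) = ψ (mk' T x) := by
  choose n hnN hn using fun x : G => hψ (mk' T x)
  have lift x : n x * x * x⁻¹ ∈ N ∧ mk' T (n x * x) = ψ (mk' T x) :=
    ⟨by simpa using hnN x, by rw [map_mul, hn, inv_mul_cancel_right]⟩
  refine ⟨MonoidHom.mk' (fun x => n x * x) fun x y => ?_, lift⟩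
  refine eq_of_mul_inv_mem_of_mk_eq hNT ?_ ?_
  · -- the quotient of two lifts of `ψ (x * y)` is a product of conjugates of elements of `N`
    have hconj := Subgroup.Normal.conj_mem ‹_› _ (N.inv_mem (hnN y)) x
    have hmem := N.mul_mem (N.mul_mem (hnN (x * y)) hconj) (N.inv_mem (hnN x))
    convert hmem using 1
    group
  · simp only [map_mul, (lift _).2]

theorem comp_eq_id_of_lifts [T.Normal] (hNT : N ⊓ T = ⊥) {f g : G →* G} {ψ χ : G ⧸ T →* G ⧸ T}
    (hχψ : χ.comp ψ = MonoidHom.id _)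
    (hf : ∀ x, f x * x⁻¹ ∈ N ∧ mk' T (f x) = ψ (mk' T x))
    (hg : ∀ x, g x * x⁻¹ ∈ N ∧ mk' T (g x) = χ (mk' T x)) :
    g.comp f = MonoidHom.id G := by
  ext x
  refine eq_of_mul_inv_mem_of_mk_eq hNT ?_ ?_
  · simpa using N.mul_mem (hg (f x)).1 (hf x).1
  · rw [MonoidHom.comp_apply, (hg _).2, (hf x).2, ← MonoidHom.comp_apply, hχψ]
    rfl

theorem exists_lift_of_mem_congruenceSubgroup [N.Normal] [T.Normal] (hNT : N ⊓ T = ⊥)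
    {ψ : MulAut (G ⧸ T)} (hψ : ψ ∈ congruenceSubgroup (N.map (mk' T))) :
    ∃ φ ∈ congruenceSubgroup N, ∀ x, ψ (mk' T x) = mk' T (φ x) := by
  obtain ⟨f, hf⟩ := exists_monoidHom_lift hNT ψ.toMonoidHom hψ
  obtain ⟨g, hg⟩ := exists_monoidHom_lift hNT (ψ⁻¹).toMonoidHom (inv_mem hψ)
  have hgf := comp_eq_id_of_lifts hNT (by ext; simp) hf hg
  have hfg := comp_eq_id_of_lifts hNT (by ext; simp) hg hf
  exact ⟨f.toMulEquiv g hgf hfg, fun x => (hf x).1, fun x => ((hf x).2).symm⟩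

end LiftFromQuotient

theorem lift_automorphisms_of_quotient_by_tau_general
    {Γ : Type*} [Group Γ] (hfg : Group.FG Γ)
    (Γ₀ : Subgroup Γ) (hchar : Γ₀.Characteristic)
    (hfi : Γ₀.FiniteIndex) (hdisj : Γ₀ ⊓ tau Γ = ⊥) :
    (∀ ψ : MulAut (Γ ⧸ tau Γ),
      (∀ x : Γ ⧸ tau Γ, ψ x * x⁻¹ ∈ Subgroup.map (QuotientGroup.mk' (tau Γ)) Γ₀) →
      ∃ φ : MulAut Γ, (∀ x : Γ, φ x * x⁻¹ ∈ Γ₀) ∧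
        ∀ x : Γ, ψ (QuotientGroup.mk' (tau Γ) x) = QuotientGroup.mk' (tau Γ) (φ x)) ∧
    (∃ H : Subgroup (MulAut (Γ ⧸ tau Γ)), H.FiniteIndex ∧
      ∀ ψ ∈ H, ∃ φ : MulAut Γ,
        ∀ x : Γ, ψ (QuotientGroup.mk' (tau Γ) x) = QuotientGroup.mk' (tau Γ) (φ x)) := by
  have lift (ψ : MulAut (Γ ⧸ tau Γ))
      (hψ : ψ ∈ MulAut.congruenceSubgroup (Γ₀.map (QuotientGroup.mk' (tau Γ)))) :
      ∃ φ : MulAut Γ, (∀ x, φ x * x⁻¹ ∈ Γ₀) ∧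
        ∀ x, ψ (QuotientGroup.mk' (tau Γ) x) = QuotientGroup.mk' (tau Γ) (φ x) :=
    exists_lift_of_mem_congruenceSubgroup hdisj hψ
  refine ⟨lift, ?_⟩
  have : Group.FG (Γ ⧸ tau Γ) := QuotientGroup.fg _
  have : (Γ₀.map (QuotientGroup.mk' (tau Γ))).FiniteIndex :=
    ⟨ne_zero_of_dvd_ne_zero hfi.index_ne_zero (Γ₀.index_map_dvd (QuotientGroup.mk'_surjective _))⟩
  obtain ⟨K, hK, hKfi, hKle⟩ :=
    (Γ₀.map (QuotientGroup.mk' (tau Γ))).exists_characteristic_finiteIndex_le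
  refine ⟨MulAut.congruenceSubgroup K, inferInstance, fun ψ hψ => ?_⟩
  obtain ⟨φ, -, hφ⟩ := lift ψ (MulAut.congruenceSubgroup_mono hKle hψ)
  exact ⟨φ, hφ⟩

/-- Let `Γ` be a finitely generated, virtually torsion-free, virtually FAR group with
`T = τ(Γ)` finite, and let `Γ₀` be a characteristic torsion-free finite-index subgroup
of `Γ` with `Γ₀ ∩ T = 1`. Write `Γ̂ = Γ/T`, `π : Γ → Γ̂` and `Γ̂₀ = π(Γ₀)`. Then every
automorphism of `Γ̂` inducing the identity on `Γ̂/Γ̂₀` lifts to an automorphism of `Γ`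
inducing the identity on `Γ/Γ₀`; consequently the image of the natural map
`Aut(Γ) → Aut(Γ̂)` contains a finite-index subgroup of `Aut(Γ̂)`. -/
theorem lift_automorphisms_of_quotient_by_tau
    {Γ : Type*} [Group Γ] (hfg : Group.FG Γ)
    (hvtf : ∃ H : Subgroup Γ, H.FiniteIndex ∧ Monoid.IsTorsionFree H)
    (hFAR : IsVirtuallyFAR Γ)
    (hTfin : (tau Γ : Set Γ).Finite)
    (Γ₀ : Subgroup Γ) (hchar : Γ₀.Characteristic) (htf : Monoid.IsTorsionFree Γ₀)
    (hfi : Γ₀.FiniteIndex) (hdisj : Γ₀ ⊓ tau Γ = ⊥) :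
    (∀ ψ : MulAut (Γ ⧸ tau Γ),
      (∀ x : Γ ⧸ tau Γ, ψ x * x⁻¹ ∈ Subgroup.map (QuotientGroup.mk' (tau Γ)) Γ₀) →
      ∃ φ : MulAut Γ, (∀ x : Γ, φ x * x⁻¹ ∈ Γ₀) ∧
        ∀ x : Γ, ψ (QuotientGroup.mk' (tau Γ) x) = QuotientGroup.mk' (tau Γ) (φ x)) ∧
    (∃ H : Subgroup (MulAut (Γ ⧸ tau Γ)), H.FiniteIndex ∧
      ∀ ψ ∈ H, ∃ φ : MulAut Γ,
        ∀ x : Γ, ψ (QuotientGroup.mk' (tau Γ) x) = QuotientGroup.mk' (tau Γ) (φ x)) :=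
  lift_automorphisms_of_quotient_by_tau_general hfg Γ₀ hchar hfi hdisj
end
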